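/- For every (x₁,x₂,x₃) ∈ 𝔛 with Im(x₃) ≠ 0 the identity x₃·(conj(x₁) − conj(x₁)·x₃ − 1)·D₂₃ − (x₃ + conj(x₂) − x₃·conj(x₂))·D₃₁ = 2i·Im(x₃)·|x₁|²·D₁₂ holds. (This is the key identity showing that the identity map between the two complex structures of 𝔛* is pseudoconformal.) -/

import Mathlib

noncomputable section

open Complex ComplexConjugate

/-- Membership in Falbel's cross-ratio variety 𝔛. -/
def memX (x₁ x₂ x₃ : ℂ) : Prop :=
  x₁ ≠ 0 ∧ x₂ ≠ 0 ∧ x₃ ≠ 0 ∧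
  ‖x₂‖ = ‖x₁‖ * ‖x₃‖ ∧
  2 * (‖x₁‖) ^ 2 * x₃.re =
    (‖x₁‖) ^ 2 + (‖x₂‖) ^ 2 - 2 * x₁.re - 2 * x₂.re + 1

/-- The minor `D₂₃`. -/
def D23 (x₂ x₃ : ℂ) : ℂ :=
  ((((‖x₂‖) ^ 2 / (‖x₃‖) ^ 2 : ℝ)) : ℂ) *
    (conj x₂ * conj x₃ - conj x₂ - conj x₃)

/-- The minor `D₃₁`. -/
def D31 (x₁ x₃ : ℂ) : ℂ :=
  conj x₃ * (((‖x₁‖) ^ 2 : ℝ) : ℂ) * (1 + conj x₁ * conj x₃ - conj x₁)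

/-- The minor `D₁₂`. -/
def D12 (x₁ x₂ : ℂ) : ℂ :=
  (conj x₂ / x₁) * (1 - conj x₁ - conj x₂)

/-! Writing `‖z‖² = z * conj z` and `2 * re z = z + conj z`, everything becomes polynomial in the
`xᵢ` and `conj xᵢ`. On 𝔛 the factor `‖x₂‖² / ‖x₃‖²` of `D₂₃` equals `‖x₁‖²`; the left side is then
`‖x₁‖² (x₃ - conj x₃) F` for an explicit polynomial `F`, and the two real equations defining 𝔛
reduce `‖x₁‖² F` to `‖x₁‖² D₁₂`. -/

/-- `a, b, c` stand for `x₁, x₂, x₃` and `a', b', c'` for their conjugates. -/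
theorem key_identity_of_relations {R : Type*} [CommRing R] {a a' b b' c c' : R}
    (hb : b * b' = a * a' * (c * c'))
    (hc : a * a' * (c + c') = a * a' + b * b' - a - a' - b - b' + 1) :
    c * (a' - a' * c - 1) * (a * a' * (b' * c' - b' - c'))
      - (c + b' - c * b') * (c' * (a * a') * (1 + a' * c' - a'))
      = (c - c') * (a' * b' * (1 - a' - b')) := by
  linear_combination (c - c') * ((a' * b' - a') * hb + a' * b' * hc)

lemma ofReal_sq_norm (z : ℂ) : (((‖z‖) ^ 2 : ℝ) : ℂ) = z * conj z := by
  rw [mul_conj']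
  push_cast
  rfl

namespace memX

variable {x₁ x₂ x₃ : ℂ}

lemma mul_conj_eq (hx : memX x₁ x₂ x₃) :
    x₂ * conj x₂ = x₁ * conj x₁ * (x₃ * conj x₃) := by
  simp only [← ofReal_sq_norm, hx.2.2.2.1]
  push_cast
  ring

lemma mul_conj_mul_add_conj (hx : memX x₁ x₂ x₃) :
    x₁ * conj x₁ * (x₃ + conj x₃) =
      x₁ * conj x₁ + x₂ * conj x₂ - x₁ - conj x₁ - x₂ - conj x₂ + 1 := by
  have h := congrArg ((↑) : ℝ → ℂ) hx.2.2.2.2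
  push_cast at h
  simp only [← mul_conj', re_eq_add_conj] at h
  linear_combination h

lemma D23_eq (hx : memX x₁ x₂ x₃) :
    D23 x₂ x₃ = x₁ * conj x₁ * (conj x₂ * conj x₃ - conj x₂ - conj x₃) := by
  have hx₃ : x₃ * conj x₃ ≠ 0 := mul_ne_zero hx.2.2.1 ((map_ne_zero _).2 hx.2.2.1)
  rw [D23, ofReal_div, ofReal_sq_norm, ofReal_sq_norm, hx.mul_conj_eq,
    mul_div_cancel_right₀ _ hx₃]

end memX

lemma mul_conj_mul_D12 {x₁ : ℂ} (x₂ : ℂ) (hx₁ : x₁ ≠ 0) :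
    x₁ * conj x₁ * D12 x₁ x₂ = conj x₁ * conj x₂ * (1 - conj x₁ - conj x₂) := by
  rw [D12]
  field_simp

theorem pseudoconformal_key_identity_general (x₁ x₂ x₃ : ℂ)
    (hx : memX x₁ x₂ x₃) :
    x₃ * (conj x₁ - conj x₁ * x₃ - 1) * D23 x₂ x₃
      - (x₃ + conj x₂ - x₃ * conj x₂) * D31 x₁ x₃
      = 2 * Complex.I * (x₃.im : ℂ) * (((‖x₁‖) ^ 2 : ℝ) : ℂ) * D12 x₁ x₂ := by
  have him : 2 * I * (x₃.im : ℂ) = x₃ - conj x₃ := by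
    rw [im_eq_sub_conj, mul_div_cancel₀ _ (mul_ne_zero two_ne_zero I_ne_zero)]
  rw [hx.D23_eq, D31, ofReal_sq_norm, him, mul_assoc (x₃ - conj x₃),
    mul_conj_mul_D12 x₂ hx.1]
  exact key_identity_of_relations hx.mul_conj_eq hx.mul_conj_mul_add_conj

/-- The key identity showing the identity map between the two complex
structures of 𝔛* is pseudoconformal. -/
theorem pseudoconformal_key_identity (x₁ x₂ x₃ : ℂ)
    (hx : memX x₁ x₂ x₃) (hIm : x₃.im ≠ 0) :
    x₃ * (conj x₁ - conj x₁ * x₃ - 1) * D23 x₂ x₃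
      - (x₃ + conj x₂ - x₃ * conj x₂) * D31 x₁ x₃
      = 2 * Complex.I * (x₃.im : ℂ) * (((‖x₁‖) ^ 2 : ℝ) : ℂ) * D12 x₁ x₂ :=
  pseudoconformal_key_identity_general x₁ x₂ x₃ hx
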